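/- Let n ≥ 3 and let H_n be the helm graph obtained from the wheel graph W_{n+1} by attaching a pendant edge to each of the n rim vertices. Then the chromatic compound curling number of H_n equals (n³ + n²)/4 if n is even and (n−1)²(n+1)/4 if n is odd. -/

import Mathlib

open SimpleGraph Finset

/-- A proper vertex colouring of `G` with colour set `Fin k`. -/
def IsProperColoring {V : Type*} (G : SimpleGraph V) {k : ℕ} (C : V → Fin k) : Prop :=
  ∀ ⦃v w⦄, G.Adj v w → C v ≠ C w

/-- The chromatic number of `G`, as a natural number. -/
noncomputable def chi {V : Type*} (G : SimpleGraph V) : ℕ :=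
  G.chromaticNumber.toNat

/-- θ(cᵢ): the number of vertices receiving colour `i` under the colouring `C`. -/
def theta {V : Type*} [Fintype V] {k : ℕ} (C : V → Fin k) (i : Fin k) : ℕ :=
  (Finset.univ.filter fun v => C v = i).card

/-- The list of colour class sizes of `C`, sorted in descending order. -/
def classSizesDesc {V : Type*} [Fintype V] {k : ℕ} (C : V → Fin k) : List ℕ :=
  (List.insertionSort (· ≤ ·) (List.ofFn fun i => theta C i)).reverse

/-- A χ⁻-colouring of `G`: a proper colouring with exactly χ(G) colours such that,
greedily, the colour class of `c₁` is as large as possible, then the colour class of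
`c₂` is as large as possible among the remaining vertices, and so on; equivalently,
the descending sequence of colour class sizes is lexicographically maximal among
all proper colourings with χ(G) colours. -/
def IsChiMinusColoring {V : Type*} [Fintype V] (G : SimpleGraph V)
    (C : V → Fin (chi G)) : Prop :=
  IsProperColoring G C ∧
    ∀ C' : V → Fin (chi G), IsProperColoring G C' →
      ¬ List.Lex (· < ·) (classSizesDesc C) (classSizesDesc C')

/-- The helm graph `Hₙ`: the wheel graph `W_{n+1}` (rim vertices `some (v, false)`,
central vertex `none`) together with a pendant vertex `some (v, true)` attached to
each rim vertex `some (v, false)`. -/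
def helmG (n : ℕ) : SimpleGraph (Option (Fin n × Bool)) :=
  SimpleGraph.fromRel (fun a b =>
    match a, b with
    | some (v, false), some (w, false) => w.val = (v.val + 1) % n
    | some (v, false), some (w, true) => w = v
    | none, some (_, false) => True
    | _, _ => False)

/-! ### Auxiliary material -/

section Aux

variable {n : ℕ}

/-! #### Adjacency lemmas -/

lemma helm_adj_center (v : Fin n) : (helmG n).Adj none (some (v, false)) :=
  ⟨by simp, Or.inl trivial⟩

lemma helm_adj_rim (hn : 3 ≤ n) {v w : Fin n} (h : w.val = (v.val + 1) % n) :
    (helmG n).Adj (some (v, false)) (some (w, false)) := by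
  refine ⟨?_, Or.inl h⟩
  simp only [ne_eq, Option.some.injEq, Prod.mk.injEq, and_true]
  intro hvw
  rw [hvw] at h
  have hw := w.isLt
  rcases Nat.lt_or_ge (w.val + 1) n with h' | h'
  · rw [Nat.mod_eq_of_lt h'] at h; omega
  · have h2 : w.val + 1 = n := by omega
    rw [h2, Nat.mod_self] at h; omega

lemma helm_adj_pendant (v : Fin n) : (helmG n).Adj (some (v, false)) (some (v, true)) :=
  ⟨by simp, Or.inl rfl⟩

/-! #### The canonical colourings -/

def evenCol (n : ℕ) : Option (Fin n × Bool) → Fin 3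
  | none => 0
  | some (_, true) => 0
  | some (v, false) => if Even v.val then 1 else 2

def oddCol (n : ℕ) : Option (Fin n × Bool) → Fin 4
  | none => 0
  | some (_, true) => 0
  | some (v, false) => if v.val = n - 1 then 3 else if Even v.val then 1 else 2

lemma evenCol_proper (hn : 3 ≤ n) (hev : Even n) :
    ∀ ⦃a b⦄, (helmG n).Adj a b → evenCol n a ≠ evenCol n b := by
  obtain ⟨m, hm2⟩ := hev
  have key : ∀ a b, a ≠ b → (match a, b with
    | some (v, false), some (w, false) => w.val = (v.val + 1) % n
    | some (v, false), some (w, true) => w = v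
    | none, some (_, false) => True
    | _, _ => False) → evenCol n a ≠ evenCol n b := by
    rintro (_ | ⟨v, _ | _⟩) (_ | ⟨w, _ | _⟩) hne hm <;> try exact hm.elim
    · simp only [evenCol]; split <;> decide
    · simp only [evenCol]
      have hm : w.val = (v.val + 1) % n := hm
      have hv := v.isLt
      have hw := w.isLt
      have hpar : Even w.val ↔ ¬ Even v.val := by
        rcases Nat.lt_or_ge (v.val + 1) n with h' | h'
        · rw [Nat.mod_eq_of_lt h'] at hm
          simp only [Nat.even_iff] at *; omega
        · have : v.val + 1 = n := by omega
          rw [this, Nat.mod_self] at hm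
          simp only [Nat.even_iff] at *; omega
      split <;> split <;> first | decide | (exfalso; tauto)
    · simp only [evenCol]; split <;> decide
  rintro a b ⟨hne, h | h⟩
  · exact key a b hne h
  · exact fun he => key b a hne.symm h he.symm

lemma oddCol_proper (hn : 3 ≤ n) (hodd : ¬ Even n) :
    ∀ ⦃a b⦄, (helmG n).Adj a b → oddCol n a ≠ oddCol n b := by
  have key : ∀ a b, a ≠ b → (match a, b with
    | some (v, false), some (w, false) => w.val = (v.val + 1) % n
    | some (v, false), some (w, true) => w = v
    | none, some (_, false) => True
    | _, _ => False) → oddCol n a ≠ oddCol n b := by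
    rintro (_ | ⟨v, _ | _⟩) (_ | ⟨w, _ | _⟩) hne hm <;> try exact hm.elim
    · simp only [oddCol]
      split
      · decide
      · split <;> decide
    · simp only [oddCol]
      have hm : w.val = (v.val + 1) % n := hm
      have hv := v.isLt
      have hw := w.isLt
      rcases Nat.lt_or_ge (v.val + 1) n with h' | h'
      · rw [Nat.mod_eq_of_lt h'] at hm
        rcases eq_or_ne w.val (n-1) with hw1 | hw1
        · have hv1 : v.val ≠ n - 1 := by omega
          rw [if_neg hv1, if_pos hw1]
          split <;> decide
        · have hv1 : v.val ≠ n - 1 := by omega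
          simp only [if_neg hw1, if_neg hv1]
          have hpar : Even w.val ↔ ¬ Even v.val := by
            simp only [Nat.even_iff] at *; omega
          split <;> split <;> first | decide | (exfalso; tauto)
      · have hvn : v.val = n - 1 := by omega
        have hn' : v.val + 1 = n := by omega
        rw [hn', Nat.mod_self] at hm
        have hw1 : w.val ≠ n - 1 := by omega
        simp only [if_pos hvn, if_neg hw1]
        split <;> decide
    · simp only [oddCol]
      split
      · decide
      · split <;> decide
  rintro a b ⟨hne, h | h⟩
  · exact key a b hne h
  · exact fun he => key b a hne.symm h he.symm

/-! #### Lower bounds for the chromatic number -/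

lemma not_two_colorable (hn : 3 ≤ n) {C : Option (Fin n × Bool) → Fin 2}
    (hC : ∀ ⦃a b⦄, (helmG n).Adj a b → C a ≠ C b) : False := by
  set r0 : Fin n := ⟨0, by omega⟩
  set r1 : Fin n := ⟨1, by omega⟩
  have h01 : (helmG n).Adj (some (r0, false)) (some (r1, false)) :=
    helm_adj_rim hn (by simp [r0, r1, Nat.mod_eq_of_lt (by omega : 1 < n)])
  have hc0 := hC (helm_adj_center r0)
  have hc1 := hC (helm_adj_center r1)
  have h01' := hC h01
  have := (C none).isLt
  have := (C (some (r0, false))).isLt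
  have := (C (some (r1, false))).isLt
  have e0 : (C none).val ≠ (C (some (r0, false))).val := fun h => hc0 (Fin.ext h)
  have e1 : (C none).val ≠ (C (some (r1, false))).val := fun h => hc1 (Fin.ext h)
  have e2 : (C (some (r0, false))).val ≠ (C (some (r1, false))).val := fun h => h01' (Fin.ext h)
  omega

lemma not_three_colorable_of_odd (hn : 3 ≤ n) (hodd : ¬ Even n)
    {C : Option (Fin n × Bool) → Fin 3}
    (hC : ∀ ⦃a b⦄, (helmG n).Adj a b → C a ≠ C b) : False := by
  set c := C none with hc
  set x := C (some (⟨0, by omega⟩, false)) with hx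
  set b := C (some (⟨1, by omega⟩, false)) with hb
  have hxc : x ≠ c := fun h => hC (helm_adj_center _) h.symm
  have hbc : b ≠ c := fun h => hC (helm_adj_center _) h.symm
  have hxb : x ≠ b := hC (helm_adj_rim hn (by simp [Nat.mod_eq_of_lt (by omega : 1 < n)]))
  have alt : ∀ i, (h : i < n) → C (some (⟨i, h⟩, false)) = if Even i then x else b := by
    intro i
    induction i with
    | zero => intro h; simp [hx]
    | succ j ih =>
      intro h
      have hj : j < n := by omega
      have hadj : (helmG n).Adj (some (⟨j, hj⟩, false)) (some (⟨j+1, h⟩, false)) :=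
        helm_adj_rim hn (by simp [Nat.mod_eq_of_lt h])
      have hne1 := hC hadj
      have hnec : C (some (⟨j+1, h⟩, false)) ≠ c :=
        fun hh => hC (helm_adj_center _) hh.symm
      rw [ih hj] at hne1
      have hmem : C (some (⟨j+1, h⟩, false)) = x ∨ C (some (⟨j+1, h⟩, false)) = b := by
        set y := C (some (⟨j+1, h⟩, false))
        have := y.isLt; have := x.isLt; have := b.isLt; have := c.isLt
        have h1 : y.val ≠ c.val := fun hh => hnec (Fin.ext hh)
        have h2 : x.val ≠ c.val := fun hh => hxc (Fin.ext hh)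
        have h3 : b.val ≠ c.val := fun hh => hbc (Fin.ext hh)
        have h4 : x.val ≠ b.val := fun hh => hxb (Fin.ext hh)
        by_cases hyx : y.val = x.val
        · left; exact Fin.ext hyx
        · right; exact Fin.ext (by omega)
      rcases Nat.even_or_odd j with hev | hod
      · rw [if_pos hev] at hne1
        have : ¬ Even (j+1) := by simp [Nat.even_iff, Nat.odd_iff] at *; omega
        rw [if_neg this]
        rcases hmem with h' | h'
        · exact absurd h'.symm hne1
        · exact h'
      · rw [if_neg (by simp [Nat.even_iff, Nat.odd_iff] at *; omega)] at hne1
        have : Even (j+1) := by simp [Nat.even_iff, Nat.odd_iff] at *; omega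
        rw [if_pos this]
        rcases hmem with h' | h'
        · exact h'
        · exact absurd h'.symm hne1
  have hlast : C (some (⟨n-1, by omega⟩, false)) = x := by
    rw [alt (n-1) (by omega), if_pos (by simp [Nat.even_iff, Nat.odd_iff] at *; omega)]
  have hadj : (helmG n).Adj (some (⟨n-1, by omega⟩, false)) (some (⟨0, by omega⟩, false)) :=
    helm_adj_rim hn (by
      show (0:ℕ) = (n - 1 + 1) % n
      have h2 : n - 1 + 1 = n := by omega
      rw [h2, Nat.mod_self])
  exact hC hadj (by rw [hlast, hx])

/-! #### The chromatic number -/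

lemma chi_eq {V : Type*} (G : SimpleGraph V) (k : ℕ) (f : V → Fin (k+1))
    (hf : ∀ ⦃a b⦄, G.Adj a b → f a ≠ f b)
    (h2 : ∀ g : V → Fin k, (∀ ⦃a b⦄, G.Adj a b → g a ≠ g b) → False) :
    chi G = k + 1 := by
  have hc3 : G.Colorable (k+1) := ⟨SimpleGraph.Coloring.mk f fun {a b} h => hf h⟩
  have hle : G.chromaticNumber ≤ (k+1 : ℕ) := hc3.chromaticNumber_le
  have hnc : ¬ G.Colorable k := fun ⟨g⟩ => h2 g (fun {a b} h => g.valid h)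
  have hlt : (k : ℕ∞) < G.chromaticNumber := by
    by_contra h
    push_neg at h
    exact hnc (SimpleGraph.chromaticNumber_le_iff_colorable.mp h)
  have heq : G.chromaticNumber = (k+1 : ℕ) := by
    refine le_antisymm hle ?_
    have := Order.add_one_le_of_lt hlt
    exact_mod_cast this
  rw [chi, heq, ENat.toNat_coe]

lemma chi_even (hn : 3 ≤ n) (hev : Even n) : chi (helmG n) = 3 :=
  chi_eq _ 2 (evenCol n) (evenCol_proper hn hev) (fun g hg => not_two_colorable hn hg)

lemma chi_odd (hn : 3 ≤ n) (hodd : ¬ Even n) : chi (helmG n) = 4 :=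
  chi_eq _ 3 (oddCol n) (oddCol_proper hn hodd)
    (fun g hg => not_three_colorable_of_odd hn hodd hg)

/-! #### Counting -/

lemma count_even_range (m : ℕ) :
    (∑ i ∈ Finset.range m, if Even i then 1 else 0) = (m+1)/2 := by
  induction m with
  | zero => simp
  | succ k ih =>
    rw [Finset.sum_range_succ, ih]
    rcases Nat.even_or_odd k with h | h
    · rw [if_pos h]; rw [Nat.even_iff] at h; omega
    · rw [if_neg (by rwa [Nat.odd_iff, ← Nat.not_even_iff] at h)]
      rw [Nat.odd_iff] at h; omega

lemma count_odd_range (m : ℕ) :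
    (∑ i ∈ Finset.range m, if ¬ Even i then 1 else 0) = m/2 := by
  induction m with
  | zero => simp
  | succ k ih =>
    rw [Finset.sum_range_succ, ih]
    rcases Nat.even_or_odd k with h | h
    · rw [if_neg (by simpa using h)]; rw [Nat.even_iff] at h; omega
    · rw [if_pos (by rwa [Nat.odd_iff, ← Nat.not_even_iff] at h)]
      rw [Nat.odd_iff] at h; omega

lemma count_even (m : ℕ) :
    ((Finset.univ : Finset (Fin m)).filter (fun v => Even v.val)).card = (m+1)/2 := by
  rw [Finset.card_filter, Fin.sum_univ_eq_sum_range (fun i => if Even i then (1:ℕ) else 0) m]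
  exact count_even_range m

lemma theta_decomp {k : ℕ} (C : Option (Fin n × Bool) → Fin k) (i : Fin k) :
    theta C i = (if C none = i then 1 else 0)
      + (((Finset.univ : Finset (Fin n)).filter (fun v => C (some (v,false)) = i)).card
      + ((Finset.univ : Finset (Fin n)).filter (fun v => C (some (v,true)) = i)).card) := by
  rw [theta, Finset.card_filter, Fintype.sum_option, Fintype.sum_prod_type]
  congr 1
  rw [Finset.card_filter, Finset.card_filter, ← Finset.sum_add_distrib]
  refine Finset.sum_congr rfl fun v _ => ?_
  rw [Fintype.sum_bool]
  exact Nat.add_comm _ _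

lemma theta_sum {k : ℕ} (C : Option (Fin n × Bool) → Fin k) :
    ∑ i, theta C i = 2 * n + 1 := by
  have h := Finset.card_eq_sum_card_fiberwise
    (f := C) (s := Finset.univ) (t := Finset.univ) (fun x _ => Finset.mem_univ _)
  simp only [Finset.card_univ] at h
  rw [show Fintype.card (Option (Fin n × Bool)) = 2 * n + 1 by
    simp [Fintype.card_option, Fintype.card_prod]; ring] at h
  simpa only [theta] using h.symm

/-! #### Colour classes of proper colourings -/

lemma theta_le {k : ℕ} {C : Option (Fin n × Bool) → Fin k}
    (hC : IsProperColoring (helmG n) C) (i : Fin k) :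
    theta C i ≤ n + 1 ∧ (theta C i = n + 1 →
      C none = i ∧ ∀ v : Fin n, C (some (v, true)) = i) := by
  rw [theta_decomp]
  by_cases hnone : C none = i
  · have hrim : ((Finset.univ : Finset (Fin n)).filter
        (fun v => C (some (v,false)) = i)).card = 0 := by
      rw [Finset.card_eq_zero, Finset.filter_eq_empty_iff]
      intro v _ hv
      exact hC (helm_adj_center v) (hnone.trans hv.symm)
    have hpc : ((Finset.univ : Finset (Fin n)).filter
        (fun v => C (some (v,true)) = i)).card ≤ n := by
      calc _ ≤ (Finset.univ : Finset (Fin n)).card := Finset.card_filter_le _ _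
        _ = n := by simp
    rw [if_pos hnone, hrim]
    refine ⟨by omega, fun heq => ⟨hnone, fun v => ?_⟩⟩
    have hfull : ((Finset.univ : Finset (Fin n)).filter
        (fun v => C (some (v,true)) = i)) = Finset.univ := by
      apply Finset.eq_univ_of_card
      simp only [Finset.card_univ, Fintype.card_fin]
      omega
    have := Finset.mem_univ v
    rw [← hfull, Finset.mem_filter] at this
    exact this.2
  · rw [if_neg hnone]
    have hle : ((Finset.univ : Finset (Fin n)).filter
        (fun v => C (some (v,false)) = i)).card
        + ((Finset.univ : Finset (Fin n)).filter
        (fun v => C (some (v,true)) = i)).card ≤ n := by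
      rw [Finset.card_filter, Finset.card_filter, ← Finset.sum_add_distrib]
      calc ∑ v : Fin n, ((if C (some (v,false)) = i then 1 else 0)
            + if C (some (v,true)) = i then 1 else 0)
          ≤ ∑ _v : Fin n, 1 := by
            refine Finset.sum_le_sum fun v _ => ?_
            by_cases h1 : C (some (v,false)) = i
            · have h2 : C (some (v,true)) ≠ i :=
                fun h2 => hC (helm_adj_pendant v) (h1.trans h2.symm)
              rw [if_pos h1, if_neg h2]
            · rw [if_neg h1]; split <;> omega
        _ = n := by simp
    exact ⟨by omega, fun heq => by omega⟩

lemma rim_class_le {k : ℕ} {C : Option (Fin n × Bool) → Fin k} (hn : 3 ≤ n)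
    (hC : IsProperColoring (helmG n) C) {i j : Fin k}
    (hnone : C none = i) (hpend : ∀ v : Fin n, C (some (v, true)) = i)
    (hij : j ≠ i) : theta C j ≤ n / 2 := by
  haveI : NeZero n := ⟨by omega⟩
  rw [theta_decomp]
  rw [if_neg (show ¬ C none = j from fun h => hij (by rw [← h, hnone]))]
  have hpc : ((Finset.univ : Finset (Fin n)).filter
      (fun v => C (some (v,true)) = j)).card = 0 := by
    rw [Finset.card_eq_zero, Finset.filter_eq_empty_iff]
    intro v _ hv
    exact hij (by rw [← hv, hpend v])
  rw [hpc]
  set T := ((Finset.univ : Finset (Fin n)).filter (fun v => C (some (v,false)) = j)) with hT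
  have hone : ((1 : Fin n) : ℕ) = 1 := by
    simp [Fin.val_one', Nat.mod_eq_of_lt (by omega : 1 < n)]
  have hshift : ∀ v : Fin n, ((v + 1 : Fin n) : ℕ) = (v.val + 1) % n := by
    intro v
    rw [Fin.add_def, hone]
  have hdisj : Disjoint T (T.image (· + 1)) := by
    rw [Finset.disjoint_left]
    intro w hw hw'
    obtain ⟨v, hv, rfl⟩ := Finset.mem_image.mp hw'
    rw [hT, Finset.mem_filter] at hv hw
    exact hC (helm_adj_rim hn (hshift v)) (hv.2.trans hw.2.symm)
  have hcard : (T.image (· + 1)).card = T.card :=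
    Finset.card_image_of_injective _ (add_left_injective 1)
  have hun : (T ∪ T.image (· + 1)).card ≤ n := by
    calc _ ≤ (Finset.univ : Finset (Fin n)).card := Finset.card_le_card (Finset.subset_univ _)
      _ = n := by simp
  rw [Finset.card_union_of_disjoint hdisj, hcard] at hun
  omega

/-! #### θ for the canonical colourings -/

lemma theta_evenCol0 (hn : 3 ≤ n) : theta (evenCol n) 0 = n + 1 := by
  rw [theta_decomp]
  have h1 : ((Finset.univ : Finset (Fin n)).filter
      (fun v => evenCol n (some (v,false)) = 0)).card = 0 := by
    rw [Finset.card_eq_zero, Finset.filter_eq_empty_iff]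
    intro v _
    simp only [evenCol]
    split <;> decide
  have h2 : ((Finset.univ : Finset (Fin n)).filter
      (fun v => evenCol n (some (v,true)) = 0)).card = n := by
    have hall : ∀ v ∈ (Finset.univ : Finset (Fin n)), evenCol n (some (v,true)) = 0 :=
      fun v _ => rfl
    rw [Finset.filter_true_of_mem hall, Finset.card_univ, Fintype.card_fin]
  rw [h1, h2]
  simp only [evenCol]
  norm_num
  omega

lemma theta_evenCol1 (hn : 3 ≤ n) : theta (evenCol n) 1 = (n+1)/2 := by
  rw [theta_decomp]
  have h1 : ((Finset.univ : Finset (Fin n)).filter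
      (fun v => evenCol n (some (v,false)) = 1)).card = (n+1)/2 := by
    rw [← count_even n]
    congr 1
    ext v
    simp only [Finset.mem_filter]; simp only [evenCol]
    constructor
    · rintro ⟨_, h⟩
      refine ⟨Finset.mem_univ _, ?_⟩
      by_contra hc
      rw [if_neg hc] at h
      exact absurd h (by decide)
    · rintro ⟨_, h⟩
      exact ⟨Finset.mem_univ _, by rw [if_pos h]⟩
  have h2 : ((Finset.univ : Finset (Fin n)).filter
      (fun v => evenCol n (some (v,true)) = 1)).card = 0 := by
    rw [Finset.card_eq_zero, Finset.filter_eq_empty_iff]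
    intro v _; simp [evenCol]
  rw [h1, h2]
  simp [evenCol]

lemma theta_evenCol2 (hn : 3 ≤ n) : theta (evenCol n) 2 = n - (n+1)/2 := by
  rw [theta_decomp]
  have h1 : ((Finset.univ : Finset (Fin n)).filter
      (fun v => evenCol n (some (v,false)) = 2)).card = n - (n+1)/2 := by
    have key : ((Finset.univ : Finset (Fin n)).filter
        (fun v => evenCol n (some (v,false)) = 2))
        = ((Finset.univ : Finset (Fin n)).filter (fun v => ¬ Even v.val)) := by
      ext v
      simp only [Finset.mem_filter]; simp only [evenCol]
      constructor
      · rintro ⟨_, h⟩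
        refine ⟨Finset.mem_univ _, fun hc => ?_⟩
        rw [if_pos hc] at h
        exact absurd h (by decide)
      · rintro ⟨_, h⟩
        exact ⟨Finset.mem_univ _, by rw [if_neg h]⟩
    rw [key]
    have := Finset.card_filter_add_card_filter_not (s := (Finset.univ : Finset (Fin n)))
      (p := fun v => Even v.val)
    rw [count_even n] at this
    simp only [Finset.card_univ, Fintype.card_fin] at this
    omega
  have h2 : ((Finset.univ : Finset (Fin n)).filter
      (fun v => evenCol n (some (v,true)) = 2)).card = 0 := by
    rw [Finset.card_eq_zero, Finset.filter_eq_empty_iff]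
    intro v _; simp [evenCol]
  rw [h1, h2]
  simp [evenCol]

lemma theta_oddCol0 (hn : 3 ≤ n) : theta (oddCol n) 0 = n + 1 := by
  rw [theta_decomp]
  have h1 : ((Finset.univ : Finset (Fin n)).filter
      (fun v => oddCol n (some (v,false)) = 0)).card = 0 := by
    rw [Finset.card_eq_zero, Finset.filter_eq_empty_iff]
    intro v _
    simp only [oddCol]
    split
    · decide
    · split <;> decide
  have h2 : ((Finset.univ : Finset (Fin n)).filter
      (fun v => oddCol n (some (v,true)) = 0)).card = n := by
    have hall : ∀ v ∈ (Finset.univ : Finset (Fin n)), oddCol n (some (v,true)) = 0 :=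
      fun v _ => rfl
    rw [Finset.filter_true_of_mem hall, Finset.card_univ, Fintype.card_fin]
  rw [h1, h2]
  simp only [oddCol]
  norm_num
  omega

lemma theta_oddCol1 (hn : 3 ≤ n) : theta (oddCol n) 1 = n / 2 := by
  rw [theta_decomp]
  have h1 : ((Finset.univ : Finset (Fin n)).filter
      (fun v => oddCol n (some (v,false)) = 1)).card = n / 2 := by
    have key : ((Finset.univ : Finset (Fin n)).filter
        (fun v => oddCol n (some (v,false)) = 1))
        = ((Finset.univ : Finset (Fin n)).filter
            (fun v : Fin n => v.val ≠ n - 1 ∧ Even v.val)) := by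
      ext v
      simp only [Finset.mem_filter, Finset.mem_univ, true_and]; simp only [oddCol]
      constructor
      · intro h
        have h1 : v.val ≠ n - 1 := by
          intro hh; rw [if_pos hh] at h; exact absurd h (by decide)
        rw [if_neg h1] at h
        refine ⟨h1, ?_⟩
        by_contra hc; rw [if_neg hc] at h; exact absurd h (by decide)
      · rintro ⟨h1, h2⟩; rw [if_neg h1, if_pos h2]
    rw [key, Finset.card_filter,
      Fin.sum_univ_eq_sum_range (fun i => if (i ≠ n - 1 ∧ Even i) then (1:ℕ) else 0) n]
    obtain ⟨m0, rfl⟩ : ∃ m0, n = m0 + 1 := ⟨n - 1, by omega⟩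
    rw [Finset.sum_range_succ]
    have hlast : (if (m0 ≠ m0 + 1 - 1 ∧ Even m0) then (1:ℕ) else 0) = 0 := by
      rw [if_neg]; rintro ⟨h, -⟩; omega
    rw [hlast]
    have hmain : (∑ i ∈ Finset.range m0, if (i ≠ m0 + 1 - 1 ∧ Even i) then (1:ℕ) else 0)
        = ∑ i ∈ Finset.range m0, if Even i then (1:ℕ) else 0 := by
      refine Finset.sum_congr rfl fun i hi => ?_
      rw [Finset.mem_range] at hi
      have : i ≠ m0 + 1 - 1 := by omega
      by_cases he : Even i
      · rw [if_pos ⟨this, he⟩, if_pos he]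
      · rw [if_neg (fun hh => he hh.2), if_neg he]
    rw [hmain, count_even_range]
    omega
  have h2 : ((Finset.univ : Finset (Fin n)).filter
      (fun v => oddCol n (some (v,true)) = 1)).card = 0 := by
    rw [Finset.card_eq_zero, Finset.filter_eq_empty_iff]
    intro v _; simp [oddCol]
  rw [h1, h2]
  simp [oddCol]

lemma theta_oddCol2 (hn : 3 ≤ n) (hodd : ¬ Even n) : theta (oddCol n) 2 = n / 2 := by
  rw [theta_decomp]
  have hn2 : n % 2 = 1 := by rwa [Nat.even_iff, ← Nat.mod_two_ne_one, not_not] at hodd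
  have h1 : ((Finset.univ : Finset (Fin n)).filter
      (fun v => oddCol n (some (v,false)) = 2)).card = n / 2 := by
    have key : ((Finset.univ : Finset (Fin n)).filter
        (fun v => oddCol n (some (v,false)) = 2))
        = ((Finset.univ : Finset (Fin n)).filter
            (fun v : Fin n => ¬ Even v.val)) := by
      ext v
      have hv := v.isLt
      simp only [Finset.mem_filter, Finset.mem_univ, true_and]; simp only [oddCol]
      constructor
      · intro h
        have h1 : v.val ≠ n - 1 := by
          intro hh; rw [if_pos hh] at h; exact absurd h (by decide)
        rw [if_neg h1] at h
        intro hc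
        rw [if_pos hc] at h; exact absurd h (by decide)
      · intro h2
        have h1 : v.val ≠ n - 1 := by
          intro hh
          apply h2
          rw [hh, Nat.even_sub (by omega)]
          simp [Nat.even_iff, hn2]
        rw [if_neg h1, if_neg h2]
    rw [key, Finset.card_filter,
      Fin.sum_univ_eq_sum_range (fun i => if ¬ Even i then (1:ℕ) else 0) n,
      count_odd_range]
  have h2 : ((Finset.univ : Finset (Fin n)).filter
      (fun v => oddCol n (some (v,true)) = 2)).card = 0 := by
    rw [Finset.card_eq_zero, Finset.filter_eq_empty_iff]
    intro v _; simp [oddCol]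
  rw [h1, h2]
  simp [oddCol]

lemma theta_oddCol3 (hn : 3 ≤ n) : theta (oddCol n) 3 = 1 := by
  rw [theta_decomp]
  have h1 : ((Finset.univ : Finset (Fin n)).filter
      (fun v => oddCol n (some (v,false)) = 3)).card = 1 := by
    have key : ((Finset.univ : Finset (Fin n)).filter
        (fun v => oddCol n (some (v,false)) = 3)) = {(⟨n-1, by omega⟩ : Fin n)} := by
      ext v
      simp only [Finset.mem_filter, Finset.mem_univ, true_and, Finset.mem_singleton]; simp only [oddCol]
      constructor
      · intro h
        by_contra hne
        have hv : v.val ≠ n - 1 := fun hh => hne (Fin.ext hh)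
        rw [if_neg hv] at h
        revert h
        split <;> decide
      · rintro rfl
        rw [if_pos rfl]
    rw [key, Finset.card_singleton]
  have h2 : ((Finset.univ : Finset (Fin n)).filter
      (fun v => oddCol n (some (v,true)) = 3)).card = 0 := by
    rw [Finset.card_eq_zero, Finset.filter_eq_empty_iff]
    intro v _; simp [oddCol]
  rw [h1, h2]
  simp [oddCol]

/-! #### Sorting small lists -/

lemma ofFn3 (f : Fin 3 → ℕ) : List.ofFn f = [f 0, f 1, f 2] := by
  simp [List.ofFn_succ]

lemma ofFn4 (f : Fin 4 → ℕ) : List.ofFn f = [f 0, f 1, f 2, f 3] := by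
  simp [List.ofFn_succ, show (Fin.succ 2 : Fin 4) = 3 from rfl]

lemma sort3 (a b : ℕ) (hab : a ≤ b) :
    List.insertionSort (· ≤ ·) [b, a, a] = [a, a, b] := by
  rcases eq_or_lt_of_le hab with rfl | h
  · simp [List.insertionSort, List.orderedInsert]
  · simp [List.insertionSort, List.orderedInsert, Nat.not_le.2 h, Nat.le_of_lt h]

lemma sort4 (m M : ℕ) (h1 : 1 ≤ m) (h2 : m ≤ M) :
    List.insertionSort (· ≤ ·) [M, m, m, 1] = [1, m, m, M] := by
  rcases eq_or_lt_of_le h1 with rfl | hm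
  · rcases eq_or_lt_of_le h2 with rfl | hM
    · simp [List.insertionSort, List.orderedInsert]
    · simp [List.insertionSort, List.orderedInsert, Nat.not_le.2 hM, Nat.le_of_lt hM]
  · rcases eq_or_lt_of_le h2 with rfl | hM
    · simp [List.insertionSort, List.orderedInsert, Nat.not_le.2 hm, Nat.le_of_lt hm]
    · simp [List.insertionSort, List.orderedInsert, Nat.not_le.2 hm, Nat.le_of_lt hm,
        Nat.not_le.2 hM, Nat.le_of_lt hM, Nat.le_of_lt (lt_of_le_of_lt h1 hM),
        Nat.not_le.2 (lt_of_le_of_lt h1 hM)]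

lemma desc_evenCol (hn : 3 ≤ n) (hev : Even n) :
    classSizesDesc (evenCol n) = [n+1, n/2, n/2] := by
  obtain ⟨m, hm⟩ := hev
  have hofn : (List.ofFn fun i => theta (evenCol n) i) = [n+1, n/2, n/2] := by
    rw [ofFn3]
    rw [theta_evenCol0 hn, theta_evenCol1 hn, theta_evenCol2 hn,
      show (n+1)/2 = n/2 by omega, show n - n/2 = n/2 by omega]
  rw [classSizesDesc, hofn, sort3 (n/2) (n+1) (by omega)]
  rfl

lemma desc_oddCol (hn : 3 ≤ n) (hodd : ¬ Even n) :
    classSizesDesc (oddCol n) = [n+1, n/2, n/2, 1] := by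
  have hofn : (List.ofFn fun i => theta (oddCol n) i) = [n+1, n/2, n/2, 1] := by
    rw [ofFn4]
    rw [theta_oddCol0 hn, theta_oddCol1 hn, theta_oddCol2 hn hodd, theta_oddCol3 hn]
  rw [classSizesDesc, hofn, sort4 (n/2) (n+1) (by omega) (by omega)]
  rfl

end Aux

/-! ### The main argument -/

section Main

variable {n : ℕ}

lemma main_even (hn : 3 ≤ n) (hev : Even n) (C : Option (Fin n × Bool) → Fin 3)
    (hprop : IsProperColoring (helmG n) C)
    (hmax : ∀ C' : Option (Fin n × Bool) → Fin 3, IsProperColoring (helmG n) C' →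
      ¬ List.Lex (· < ·) (classSizesDesc C) (classSizesDesc C')) :
    ∏ i, theta C i = (n ^ 3 + n ^ 2) / 4 := by
  have hlex := hmax (evenCol n) (evenCol_proper hn hev)
  rw [desc_evenCol hn hev] at hlex
  have hperm : (classSizesDesc C).Perm (List.ofFn fun i => theta C i) :=
    (List.reverse_perm _).trans (List.perm_insertionSort _ _)
  have hlen : (classSizesDesc C).length = 3 := by
    rw [hperm.length_eq, List.length_ofFn]
  obtain ⟨a, b, c, habc⟩ := List.length_eq_three.mp hlen
  rw [habc] at hlex hperm
  have hsum : a + b + c = 2 * n + 1 := by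
    have h := hperm.sum_eq
    rw [List.sum_ofFn, theta_sum C] at h
    simp at h
    omega
  have hmema : ∃ i, theta C i = a := by
    have : a ∈ [a, b, c] := by simp
    rw [hperm.mem_iff, List.mem_ofFn] at this
    exact this
  have hmemb : ∃ i, theta C i = b := by
    have : b ∈ [a, b, c] := by simp
    rw [hperm.mem_iff, List.mem_ofFn] at this
    exact this
  obtain ⟨ia, hia⟩ := hmema
  obtain ⟨ib, hib⟩ := hmemb
  have ha_le : a ≤ n + 1 := hia ▸ (theta_le hprop ia).1
  have ha : a = n + 1 := by
    by_contra h
    exact hlex (List.Lex.rel (by omega))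
  subst ha
  obtain ⟨hnone, hpend⟩ := (theta_le hprop ia).2 hia
  have hb_le : b ≤ n / 2 := by
    rcases eq_or_ne ib ia with rfl | hne
    · rw [hia] at hib; omega
    · exact hib ▸ rim_class_le hn hprop hnone hpend hne
  have hb : b = n / 2 := by
    by_contra h
    exact hlex (List.Lex.cons (List.Lex.rel (by omega)))
  have hc : c = n / 2 := by
    obtain ⟨m, hm⟩ := hev
    omega
  subst hb; subst hc
  have hprod : ∏ i, theta C i = (n + 1) * (n / 2 * (n / 2 * 1)) := by
    rw [← List.prod_ofFn (f := fun i => theta C i), ← hperm.prod_eq]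
    simp
  rw [hprod]
  obtain ⟨m, hm⟩ := hev
  have h2 : n / 2 = m := by omega
  rw [h2, hm, show (m+m)^3 + (m+m)^2 = 4 * ((m + m + 1) * (m * (m * 1))) by ring,
    Nat.mul_div_cancel_left _ (by norm_num)]

lemma main_odd (hn : 3 ≤ n) (hodd : ¬ Even n) (C : Option (Fin n × Bool) → Fin 4)
    (hprop : IsProperColoring (helmG n) C)
    (hmax : ∀ C' : Option (Fin n × Bool) → Fin 4, IsProperColoring (helmG n) C' →
      ¬ List.Lex (· < ·) (classSizesDesc C) (classSizesDesc C')) :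
    ∏ i, theta C i = (n - 1) ^ 2 * (n + 1) / 4 := by
  have hn2 : n % 2 = 1 := by rwa [Nat.even_iff, ← Nat.mod_two_ne_one, not_not] at hodd
  have hlex := hmax (oddCol n) (oddCol_proper hn hodd)
  rw [desc_oddCol hn hodd] at hlex
  have hperm : (classSizesDesc C).Perm (List.ofFn fun i => theta C i) :=
    (List.reverse_perm _).trans (List.perm_insertionSort _ _)
  have hlen : (classSizesDesc C).length = 4 := by
    rw [hperm.length_eq, List.length_ofFn]
  obtain ⟨a, l, habc0⟩ : ∃ a l, classSizesDesc C = a :: l := by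
    cases h : classSizesDesc C with
    | nil => rw [h] at hlen; simp at hlen
    | cons a l => exact ⟨a, l, rfl⟩
  have hlen3 : l.length = 3 := by rw [habc0] at hlen; simpa using hlen
  obtain ⟨b, c, d, hl⟩ := List.length_eq_three.mp hlen3
  rw [hl] at habc0
  rw [habc0] at hlex hperm
  have hsum : a + b + c + d = 2 * n + 1 := by
    have h := hperm.sum_eq
    rw [List.sum_ofFn, theta_sum C] at h
    simp at h
    omega
  have hmema : ∃ i, theta C i = a := by
    have : a ∈ [a, b, c, d] := by simp
    rw [hperm.mem_iff, List.mem_ofFn] at this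
    exact this
  have hmemb : ∃ i, theta C i = b := by
    have : b ∈ [a, b, c, d] := by simp
    rw [hperm.mem_iff, List.mem_ofFn] at this
    exact this
  have hmemc : ∃ i, theta C i = c := by
    have : c ∈ [a, b, c, d] := by simp
    rw [hperm.mem_iff, List.mem_ofFn] at this
    exact this
  obtain ⟨ia, hia⟩ := hmema
  obtain ⟨ib, hib⟩ := hmemb
  obtain ⟨ic, hic⟩ := hmemc
  have ha_le : a ≤ n + 1 := hia ▸ (theta_le hprop ia).1
  have ha : a = n + 1 := by
    by_contra h
    exact hlex (List.Lex.rel (by omega))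
  subst ha
  obtain ⟨hnone, hpend⟩ := (theta_le hprop ia).2 hia
  have hb_le : b ≤ n / 2 := by
    rcases eq_or_ne ib ia with rfl | hne
    · rw [hia] at hib; omega
    · exact hib ▸ rim_class_le hn hprop hnone hpend hne
  have hb : b = n / 2 := by
    by_contra h
    exact hlex (List.Lex.cons (List.Lex.rel (by omega)))
  subst hb
  have hc_le : c ≤ n / 2 := by
    rcases eq_or_ne ic ia with rfl | hne
    · rw [hia] at hic; omega
    · exact hic ▸ rim_class_le hn hprop hnone hpend hne
  have hc : c = n / 2 := by
    by_contra h
    exact hlex (List.Lex.cons (List.Lex.cons (List.Lex.rel (by omega))))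
  have hd : d = 1 := by omega
  subst hc; subst hd
  have hprod : ∏ i, theta C i = (n + 1) * (n / 2 * (n / 2 * (1 * 1))) := by
    rw [← List.prod_ofFn (f := fun i => theta C i), ← hperm.prod_eq]
    simp
  rw [hprod]
  obtain ⟨m, hm⟩ : ∃ m, n = 2 * m + 1 := ⟨n / 2, by omega⟩
  have h2 : n / 2 = m := by omega
  rw [h2, hm, show (2*m+1-1)^2 * (2*m+1+1) = 4 * ((2*m+1+1) * (m * (m * (1*1)))) by
      rw [show 2*m+1-1 = 2*m by omega]; ring,
    Nat.mul_div_cancel_left _ (by norm_num)]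

end Main

theorem helmGraph_chromaticCompoundCurlingNumber (n : ℕ) (hn : 3 ≤ n)
    (C : Option (Fin n × Bool) → Fin (chi (helmG n)))
    (hC : IsChiMinusColoring (helmG n) C) :
    ∏ i, theta C i = if Even n then (n ^ 3 + n ^ 2) / 4 else (n - 1) ^ 2 * (n + 1) / 4 := by
  obtain ⟨hprop, hmax⟩ := hC
  by_cases hev : Even n
  · rw [if_pos hev]
    have h3 : chi (helmG n) = 3 := chi_even hn hev
    revert hprop hmax
    revert C
    rw [h3]
    intro C hprop hmax
    exact main_even hn hev C hprop hmax
  · rw [if_neg hev]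
    have h4 : chi (helmG n) = 4 := chi_odd hn hev
    revert hprop hmax
    revert C
    rw [h4]
    intro C hprop hmax
    exact main_odd hn hev C hprop hmax
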